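/- Let n ≥ 1. Let f : ℝⁿ → ℝ be Lipschitz with compact support. Then the limit as t → 0⁺ of t^(−1/2) ∬_{ℝⁿ×ℝⁿ} p_t(x,y) |f(x) − f(y)| dx dy exists and equals (2/√π) · ∫_{ℝⁿ} ‖Df(x)‖ dx, where Df(x) is the Fréchet derivative of f at x (which exists for Lebesgue-a.e. x by Rademacher's theorem; at points of non-differentiability the integrand uses the convention Df(x) = 0). -/

import Mathlib

/-!
Substituting `y = x + 2√t z` turns `t^(-1/2) ∫∫ p_t(x,y) |f x - f y|` into
`π^(-n/2) ∫∫ e^(-‖z‖²) |f (x + 2√t z) - f x| / √t`. By Rademacher's theorem the integrand tends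
to `2 e^(-‖z‖²) |Df(x) z|` for a.e. `(x, z)`, and the Lipschitz bound together with the compact
support dominates it by a product of Gaussians, so dominated convergence applies. Finally,
rotating `Df(x)` onto a coordinate functional, `∫ e^(-‖z‖²) |ξ z| dz = ‖ξ‖ π^((n-1)/2)`.
-/

open MeasureTheory Real Filter

/-- The Gaussian heat kernel on `ℝⁿ`. -/
noncomputable def heatKernel (n : ℕ) (t : ℝ) (x y : EuclideanSpace ℝ (Fin n)) : ℝ :=
  (4 * Real.pi * t) ^ (-(n : ℝ) / 2) * Real.exp (-‖x - y‖ ^ 2 / (4 * t))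

open Topology InnerProductSpace
open scoped NNReal

theorem tendsto_two_mul_sqrt_nhdsGT_zero :
    Tendsto (fun t : ℝ => 2 * √t) (𝓝[>] 0) (𝓝[>] 0) := by
  refine tendsto_nhdsWithin_of_tendsto_nhds_of_eventually_within _ ?_ ?_
  · simpa using ((continuous_sqrt.tendsto 0).const_mul 2).mono_left nhdsWithin_le_nhds
  · filter_upwards [self_mem_nhdsWithin] with t (ht : 0 < t)
    exact mul_pos two_pos (sqrt_pos.2 ht)

theorem DifferentiableAt.tendsto_norm_sub_div_sqrt {E F : Type*} [NormedAddCommGroup E]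
    [NormedSpace ℝ E] [NormedAddCommGroup F] [NormedSpace ℝ F] {f : E → F} {x : E}
    (hf : DifferentiableAt ℝ f x) (z : E) :
    Tendsto (fun t => ‖f (x + (2 * √t) • z) - f x‖ / √t) (𝓝[>] 0)
      (𝓝 (2 * ‖fderiv ℝ f x z‖)) := by
  have hc : Tendsto (fun t : ℝ => ‖(2 * √t)⁻¹‖) (𝓝[>] 0) atTop :=
    tendsto_norm_atTop_atTop.comp (tendsto_inv_nhdsGT_zero.comp tendsto_two_mul_sqrt_nhdsGT_zero)
  refine ((hf.hasFDerivAt.lim z hc).norm.const_mul 2).congr' ?_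
  filter_upwards [self_mem_nhdsWithin] with t (ht : 0 < t)
  rw [inv_inv, norm_smul, norm_inv, Real.norm_of_nonneg (by positivity)]
  field_simp

theorem mul_exp_neg_sq_le {r s R : ℝ} (hr : 0 ≤ r) (hrs : r ≤ R + 2 * s) :
    s * exp (-s ^ 2) ≤ exp (R ^ 2 / 8) * (exp (-(1 / 16) * r ^ 2) * exp (-(1 / 4) * s ^ 2)) := by
  have hs : s ≤ exp (s ^ 2 / 4) := by
    nlinarith [add_one_le_exp (s ^ 2 / 4), sq_nonneg (s / 2 - 1)]
  calc s * exp (-s ^ 2) ≤ exp (s ^ 2 / 4) * exp (-s ^ 2) := by gcongr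
    _ ≤ exp (R ^ 2 / 8 + -(1 / 16) * r ^ 2 + -(1 / 4) * s ^ 2) := by
      rw [← exp_add, exp_le_exp]
      nlinarith [sq_nonneg (R - 2 * s), mul_self_le_mul_self hr hrs]
    _ = _ := by rw [exp_add, exp_add, mul_assoc]

theorem norm_le_of_apply_add_sub_ne_zero {E F : Type*} [NormedAddCommGroup E]
    [NormedAddCommGroup F] {f : E → F} {R : ℝ} (hR : tsupport f ⊆ Metric.closedBall 0 R)
    {x y : E} (hxy : f (x + y) - f x ≠ 0) :
    ‖x‖ ≤ R + ‖y‖ := by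
  have hmem : ∀ w, f w ≠ 0 → ‖w‖ ≤ R := fun w hw => by
    simpa using hR (subset_tsupport f hw)
  by_cases hx : f x = 0
  · rw [hx, sub_zero] at hxy
    calc ‖x‖ ≤ ‖x + y‖ + ‖y‖ := norm_le_add_norm_add x y
      _ ≤ R + ‖y‖ := by grw [hmem _ hxy]
  · linarith [hmem x hx, norm_nonneg y]

-- Dominates `‖z‖ e^(-‖z‖²)` wherever `‖x‖ ≤ R + 2‖z‖`, by `mul_exp_neg_sq_le`.
noncomputable def gaussianMajorant {E : Type*} [NormedAddCommGroup E] (R : ℝ) (p : E × E) : ℝ :=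
  exp (R ^ 2 / 8) * (exp (-(1 / 16) * ‖p.1‖ ^ 2) * exp (-(1 / 4) * ‖p.2‖ ^ 2))

section NormedSpace

variable {E : Type*} [NormedAddCommGroup E] [NormedSpace ℝ E]

noncomputable def gaussianDifferenceQuotient (f : E → ℝ) (t : ℝ) (p : E × E) : ℝ :=
  exp (-‖p.2‖ ^ 2) * (|f (p.1 + (2 * √t) • p.2) - f p.1| / √t)

noncomputable def gaussianDirectionalDerivative (f : E → ℝ) (p : E × E) : ℝ :=
  exp (-‖p.2‖ ^ 2) * (2 * |fderiv ℝ f p.1 p.2|)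

theorem LipschitzWith.abs_sub_div_sqrt_le {C : ℝ≥0} {f : E → ℝ} (hf : LipschitzWith C f)
    {t : ℝ} (ht : 0 < t) (x z : E) :
    |f (x + (2 * √t) • z) - f x| / √t ≤ 2 * C * ‖z‖ := by
  rw [div_le_iff₀ (sqrt_pos.2 ht), ← Real.dist_eq]
  calc dist (f (x + (2 * √t) • z)) (f x) ≤ C * dist (x + (2 * √t) • z) x := hf.dist_le_mul _ _
    _ = 2 * C * ‖z‖ * √t := by
      rw [dist_eq_norm, add_sub_cancel_left, norm_smul, Real.norm_of_nonneg (by positivity)]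
      ring

theorem norm_gaussianDifferenceQuotient_le {C : ℝ≥0} {R : ℝ} {f : E → ℝ}
    (hf : LipschitzWith C f) (hR : tsupport f ⊆ Metric.closedBall 0 R) {t : ℝ}
    (ht : t ∈ Set.Ioc 0 1) (p : E × E) :
    ‖gaussianDifferenceQuotient f t p‖ ≤ 2 * C * gaussianMajorant R p := by
  obtain ⟨x, z⟩ := p
  rw [Real.norm_of_nonneg (by unfold gaussianDifferenceQuotient; positivity)]
  by_cases hxz : f (x + (2 * √t) • z) - f x = 0
  · simp only [gaussianDifferenceQuotient, gaussianMajorant, hxz, abs_zero, zero_div, mul_zero]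
    positivity
  calc gaussianDifferenceQuotient f t (x, z) ≤ exp (-‖z‖ ^ 2) * (2 * C * ‖z‖) :=
        mul_le_mul_of_nonneg_left (hf.abs_sub_div_sqrt_le ht.1 x z) (exp_pos _).le
    _ = 2 * C * (‖z‖ * exp (-‖z‖ ^ 2)) := by ring
    _ ≤ 2 * C * gaussianMajorant R (x, z) := by
      gcongr
      refine mul_exp_neg_sq_le (norm_nonneg x)
        ((norm_le_of_apply_add_sub_ne_zero hR hxz).trans ?_)
      rw [norm_smul, Real.norm_of_nonneg (by positivity)]
      gcongr
      linarith [sqrt_le_one.2 ht.2]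

theorem continuous_gaussianDifferenceQuotient {f : E → ℝ} (hf : Continuous f) (t : ℝ) :
    Continuous (gaussianDifferenceQuotient f t) := by
  unfold gaussianDifferenceQuotient
  fun_prop

end NormedSpace

theorem integral_abs_mul_exp_neg_sq : ∫ x : ℝ, |x| * exp (-x ^ 2) = 1 := by
  have h := integral_rpow_mul_exp_neg_mul_rpow (p := 2) (q := 1) (b := 1) two_pos
    (by norm_num) one_pos
  norm_num at h
  have h_abs := integral_comp_abs (f := fun x => x * exp (-x ^ 2))
  simp only [sq_abs] at h_abs
  rw [h_abs, h]
  norm_num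

theorem EuclideanSpace.integral_exp_neg_sq_norm_mul_abs_apply {ι : Type*} [Fintype ι]
    (i₀ : ι) :
    (∫ z : EuclideanSpace ℝ ι, exp (-‖z‖ ^ 2) * |z i₀|) * √π = √π ^ Fintype.card ι := by
  classical
  let g : ι → ℝ → ℝ := fun i s => exp (-s ^ 2) * if i = i₀ then |s| else 1
  have hg : ∀ x : ι → ℝ, ∏ i, g i (x i) = exp (-‖WithLp.toLp 2 x‖ ^ 2) * |x i₀| := by
    intro x
    simp only [g, Finset.prod_mul_distrib, Finset.prod_ite_eq', Finset.mem_univ, if_true,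
      EuclideanSpace.norm_sq_eq, ← exp_sum, Finset.sum_neg_distrib]
    simp
  have hg_integral : ∀ i, ∫ s, g i s = if i = i₀ then 1 else √π := by
    intro i
    split_ifs with h
    · simpa [g, h, mul_comm] using integral_abs_mul_exp_neg_sq
    · simpa [g, h] using integral_gaussian 1
  rw [← (EuclideanSpace.volume_preserving_symm_measurableEquiv_toLp ι).symm.integral_comp
    (MeasurableEquiv.measurableEmbedding _)]
  simp only [MeasurableEquiv.symm_symm, MeasurableEquiv.coe_toLp, ← hg]
  rw [integral_fintype_prod_volume_eq_prod, Finset.prod_congr rfl fun i _ => hg_integral i,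
    Fintype.prod_eq_mul_prod_compl i₀, if_pos rfl, one_mul,
    Finset.prod_congr rfl fun i hi => if_neg (Finset.notMem_singleton.1 (Finset.mem_compl.1 hi)),
    Finset.prod_const, Finset.card_compl, Finset.card_singleton,
    pow_sub_one_mul (Fintype.card_pos_iff.2 ⟨i₀⟩).ne']

section InnerProductSpace

variable {V : Type*} [NormedAddCommGroup V] [InnerProductSpace ℝ V] [FiniteDimensional ℝ V]
  [MeasurableSpace V] [BorelSpace V]

theorem integral_exp_neg_sq_norm_mul_abs_inner (v : V) :
    ∫ z : V, exp (-‖z‖ ^ 2) * |⟪v, z⟫_ℝ| = ‖v‖ * √π ^ Module.finrank ℝ V / √π := by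
  rw [eq_div_iff (sqrt_pos.2 pi_pos).ne']
  rcases eq_or_ne v 0 with rfl | hv
  · simp
  have : Nontrivial V := nontrivial_of_ne v 0 hv
  let i₀ : Fin (Module.finrank ℝ V) := ⟨0, Module.finrank_pos⟩
  obtain ⟨b, hb⟩ := (orthonormal_subsingleton_iff.2 fun _ => norm_smul_inv_norm hv
    ).exists_orthonormalBasis_extension_of_card_eq (Fintype.card_fin _).symm (s := {i₀})
      (v := fun _ => ‖v‖⁻¹ • v)
  have hinner : ∀ w, ⟪v, b.repr.symm w⟫_ℝ = ‖v‖ * w i₀ := by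
    intro w
    rw [← b.repr.apply_symm_apply w, b.repr_apply_apply, hb i₀ rfl, b.repr.symm_apply_apply,
      real_inner_smul_left, mul_inv_cancel_left₀ (norm_ne_zero_iff.2 hv)]
  rw [← b.measurePreserving_repr_symm.integral_comp b.repr.symm.toHomeomorph.measurableEmbedding]
  simp only [LinearIsometryEquiv.norm_map, hinner, abs_mul, abs_norm, mul_left_comm _ ‖v‖]
  rw [integral_const_mul, mul_assoc, EuclideanSpace.integral_exp_neg_sq_norm_mul_abs_apply,
    Fintype.card_fin]

theorem integral_exp_neg_sq_norm_mul_abs_apply (ξ : V →L[ℝ] ℝ) :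
    ∫ z : V, exp (-‖z‖ ^ 2) * |ξ z| = ‖ξ‖ * √π ^ Module.finrank ℝ V / √π := by
  simpa only [toDual_symm_apply, LinearIsometryEquiv.norm_map] using
    integral_exp_neg_sq_norm_mul_abs_inner ((toDual ℝ V).symm ξ)

theorem integrable_exp_neg_mul_sq_norm {b : ℝ} (hb : 0 < b) :
    Integrable (fun v : V => exp (-b * ‖v‖ ^ 2)) :=
  Integrable.of_integral_ne_zero <| by
    rw [GaussianFourier.integral_rexp_neg_mul_sq_norm hb]
    positivity

theorem integrable_gaussianMajorant (R : ℝ) : Integrable (gaussianMajorant (E := V) R) :=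
  ((integrable_exp_neg_mul_sq_norm (by norm_num)).mul_prod
    (integrable_exp_neg_mul_sq_norm (by norm_num))).const_mul _

theorem integrable_gaussianDifferenceQuotient {C : ℝ≥0} {R : ℝ} {f : V → ℝ}
    (hf : LipschitzWith C f) (hR : tsupport f ⊆ Metric.closedBall 0 R) {t : ℝ}
    (ht : t ∈ Set.Ioc 0 1) : Integrable (gaussianDifferenceQuotient f t) :=
  ((integrable_gaussianMajorant R).const_mul _).mono'
    (continuous_gaussianDifferenceQuotient hf.continuous t).aestronglyMeasurable
    (.of_forall (norm_gaussianDifferenceQuotient_le hf hR ht))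

theorem LipschitzWith.ae_tendsto_gaussianDifferenceQuotient {C : ℝ≥0} {f : V → ℝ}
    (hf : LipschitzWith C f) :
    ∀ᵐ p : V × V, Tendsto (fun t => gaussianDifferenceQuotient f t p) (𝓝[>] 0)
      (𝓝 (gaussianDirectionalDerivative f p)) := by
  filter_upwards [Measure.quasiMeasurePreserving_fst.ae hf.ae_differentiableAt] with p hp
  simpa only [gaussianDifferenceQuotient, gaussianDirectionalDerivative, Real.norm_eq_abs]
    using (hp.tendsto_norm_sub_div_sqrt p.2).const_mul _

theorem integrable_gaussianDirectionalDerivative {C : ℝ≥0} {R : ℝ} {f : V → ℝ}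
    (hf : LipschitzWith C f) (hR : tsupport f ⊆ Metric.closedBall 0 R) :
    Integrable (gaussianDirectionalDerivative f) := by
  have hlim := hf.ae_tendsto_gaussianDifferenceQuotient
  refine ((integrable_gaussianMajorant R).const_mul (2 * C)).mono'
    (aestronglyMeasurable_of_tendsto_ae _ (fun t =>
      (continuous_gaussianDifferenceQuotient hf.continuous t).aestronglyMeasurable) hlim) ?_
  filter_upwards [hlim] with p hp
  exact le_of_tendsto hp.norm (eventually_of_mem (Ioc_mem_nhdsGT one_pos) fun t ht =>
    norm_gaussianDifferenceQuotient_le hf hR ht p)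

theorem integral_gaussianDirectionalDerivative {C : ℝ≥0} {R : ℝ} {f : V → ℝ}
    (hf : LipschitzWith C f) (hR : tsupport f ⊆ Metric.closedBall 0 R) :
    ∫ p, gaussianDirectionalDerivative f p =
      2 * √π ^ Module.finrank ℝ V / √π * ∫ x, ‖fderiv ℝ f x‖ := by
  rw [Measure.volume_eq_prod, integral_prod _ (integrable_gaussianDirectionalDerivative hf hR),
    ← integral_const_mul]
  congr 1 with x
  simp only [gaussianDirectionalDerivative, mul_left_comm _ (2 : ℝ)]
  rw [integral_const_mul, integral_exp_neg_sq_norm_mul_abs_apply]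
  ring

theorem tendsto_integral_gaussianDifferenceQuotient {C : ℝ≥0} {R : ℝ} {f : V → ℝ}
    (hf : LipschitzWith C f) (hR : tsupport f ⊆ Metric.closedBall 0 R) :
    Tendsto (fun t => ∫ p, gaussianDifferenceQuotient f t p) (𝓝[>] 0)
      (𝓝 (2 * √π ^ Module.finrank ℝ V / √π * ∫ x, ‖fderiv ℝ f x‖)) := by
  rw [← integral_gaussianDirectionalDerivative hf hR]
  refine tendsto_integral_filter_of_dominated_convergence _
    (.of_forall fun t =>
      (continuous_gaussianDifferenceQuotient hf.continuous t).aestronglyMeasurable)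
    ?_ ((integrable_gaussianMajorant R).const_mul (2 * C)) hf.ae_tendsto_gaussianDifferenceQuotient
  filter_upwards [Ioc_mem_nhdsGT one_pos] with t ht
  exact .of_forall (norm_gaussianDifferenceQuotient_le hf hR ht)

end InnerProductSpace

theorem heatKernel_add_smul (n : ℕ) {t : ℝ} (ht : 0 < t) (x z : EuclideanSpace ℝ (Fin n)) :
    heatKernel n t x (x + (2 * √t) • z) = ((2 * √t) ^ n)⁻¹ * ((√π ^ n)⁻¹ * exp (-‖z‖ ^ 2)) := by
  have hsqrt : √(4 * π * t) = 2 * √t * √π := by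
    rw [mul_right_comm, sqrt_mul (by positivity), sqrt_mul (by norm_num),
      show (4 : ℝ) = 2 ^ 2 by norm_num, sqrt_sq two_pos.le]
  have hnorm : ‖x - (x + (2 * √t) • z)‖ ^ 2 = 4 * t * ‖z‖ ^ 2 := by
    rw [sub_add_cancel_left, norm_neg, norm_smul, mul_pow, Real.norm_of_nonneg (by positivity),
      mul_pow, sq_sqrt ht.le]
    ring
  rw [heatKernel, rpow_div_two_eq_sqrt _ (by positivity), rpow_neg (by positivity),
    rpow_natCast, hsqrt, hnorm, mul_pow, mul_inv, neg_div, mul_div_cancel_left₀ _ (by positivity)]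
  ring

theorem rpow_neg_half_mul_integral_heatKernel_mul_abs_sub (n : ℕ) {t : ℝ} (ht : 0 < t)
    (f : EuclideanSpace ℝ (Fin n) → ℝ) (x : EuclideanSpace ℝ (Fin n)) :
    t ^ (-(1 : ℝ) / 2) * ∫ y, heatKernel n t x y * |f x - f y| =
      (√π ^ n)⁻¹ * ∫ z, gaussianDifferenceQuotient f t (x, z) := by
  have hc : 0 < 2 * √t := by positivity
  have hscale := Measure.integral_comp_smul_of_nonneg volume
    (fun w => heatKernel n t x (x + w) * |f x - f (x + w)|) (2 * √t) (hR := hc.le)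
  rw [finrank_euclideanSpace_fin, smul_eq_mul, eq_inv_mul_iff_mul_eq₀ (by positivity)] at hscale
  rw [← integral_add_left_eq_self _ x, ← hscale, rpow_div_two_eq_sqrt _ ht.le, rpow_neg_one,
    ← integral_const_mul, ← integral_const_mul, ← integral_const_mul]
  congr 1 with z
  rw [gaussianDifferenceQuotient, heatKernel_add_smul n ht, abs_sub_comm]
  field_simp

theorem stmt_1_general (n : ℕ)
    (f : EuclideanSpace ℝ (Fin n) → ℝ)
    (hf : ∃ C : NNReal, LipschitzWith C f) (hsupp : HasCompactSupport f) :
    Tendsto (fun t : ℝ =>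
        t ^ (-(1 : ℝ) / 2) * ∫ x, ∫ y, heatKernel n t x y * |f x - f y|)
      (nhdsWithin 0 (Set.Ioi 0))
      (nhds ((2 / Real.sqrt Real.pi) * ∫ x, ‖fderiv ℝ f x‖)) := by
  obtain ⟨C, hf⟩ := hf
  obtain ⟨R, -, hR⟩ := hsupp.isBounded.subset_closedBall_lt 0 0
  have hlim := (tendsto_integral_gaussianDifferenceQuotient hf hR).const_mul (√π ^ n)⁻¹
  rw [finrank_euclideanSpace_fin] at hlim
  convert hlim.congr' ?_ using 2
  · field_simp
  · filter_upwards [Ioc_mem_nhdsGT one_pos] with t ht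
    rw [Measure.volume_eq_prod, integral_prod _ (integrable_gaussianDifferenceQuotient hf hR ht),
      ← integral_const_mul, ← integral_const_mul]
    congr 1 with x
    exact (rpow_neg_half_mul_integral_heatKernel_mul_abs_sub n ht.1 f x).symm

/-- Euclidean Lipschitz case of the heat-kernel characterization of the total variation. -/
theorem stmt_1 (n : ℕ) (hn : 1 ≤ n)
    (f : EuclideanSpace ℝ (Fin n) → ℝ)
    (hf : ∃ C : NNReal, LipschitzWith C f) (hsupp : HasCompactSupport f) :
    Tendsto (fun t : ℝ =>
        t ^ (-(1 : ℝ) / 2) * ∫ x, ∫ y, heatKernel n t x y * |f x - f y|)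
      (nhdsWithin 0 (Set.Ioi 0))
      (nhds ((2 / Real.sqrt Real.pi) * ∫ x, ‖fderiv ℝ f x‖)) :=
  stmt_1_general n f hf hsupp
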